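/- Refinement monotonicity of verdicts: let ≼ be the partial order on {⊤, ⊥, ?, ×} with ? ≼ ⊤ ≼ ×, ? ≼ ⊥ ≼ ×, and ⊤, ⊥ incomparable. If A ⊇ A', O ⊇ O', t ≤ t', t ≥ τ(O), and t' ≥ τ(O'), then 𝒱(φ,A)(O,t) ≼ 𝒱(φ,A')(O',t'). -/
import Mathlib


open Classical

/-- A finite timed word: a finite sequence of letters with non-decreasing,
non-negative timestamps. -/
structure FTW (Sigma : Type) where
  toList : List (Sigma × ℝ)
  nonneg : ∀ p ∈ toList, 0 ≤ p.2
  mono : (toList.map Prod.snd).Chain' (· ≤ ·)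

/-- τ(ρ): the last timestamp of a finite timed word (0 for the empty word). -/
def FTW.dur {Sigma : Type} (ρ : FTW Sigma) : ℝ := (ρ.toList.map Prod.snd).getLastD 0

/-- An infinite timed word: letters with non-decreasing, non-negative,
divergent timestamps.  The set of all such words is TΣ^ω, here `Set.univ`. -/
structure ITW (Sigma : Type) where
  σ : ℕ → Sigma
  τ : ℕ → ℝ
  nonneg : ∀ i, 0 ≤ τ i
  mono : Monotone τ
  div : Filter.Tendsto τ Filter.atTop Filter.atTop

/-- ρ is the concatenation ρ₁ ·_t ρ₂ of a finite and an infinite timed word: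
the timestamps of ρ₂ are shifted by t. -/
def IsConcat {Sigma : Type} (ρ₁ : FTW Sigma) (t : ℝ) (ρ₂ : ITW Sigma) (ρ : ITW Sigma) : Prop :=
  ρ₁.dur ≤ t ∧
  (∀ i : Fin ρ₁.toList.length, ρ.σ i = (ρ₁.toList.get i).1 ∧ ρ.τ i = (ρ₁.toList.get i).2) ∧
  (∀ i, ρ₁.toList.length ≤ i →
    ρ.σ i = ρ₂.σ (i - ρ₁.toList.length) ∧ ρ.τ i = ρ₂.τ (i - ρ₁.toList.length) + t)

/-- L₁ ·_t L₂, elementwise concatenation at time t. -/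
def concatSet {Sigma : Type} (L₁ : Set (FTW Sigma)) (t : ℝ) (L₂ : Set (ITW Sigma)) :
    Set (ITW Sigma) :=
  {ρ | ∃ ρ₁ ∈ L₁, ∃ ρ₂ ∈ L₂, IsConcat ρ₁ t ρ₂ ρ}

/-- ρ is the concatenation ρ₁ ·_t ρ₂ of two finite timed words. -/
def IsConcatF {Sigma : Type} (ρ₁ : FTW Sigma) (t : ℝ) (ρ₂ ρ : FTW Sigma) : Prop :=
  ρ₁.dur ≤ t ∧ ρ.toList = ρ₁.toList ++ ρ₂.toList.map (fun p => (p.1, p.2 + t))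

/-- O ⊑_t O': the observation O' extends the observation O at time t. -/
def Extends {Sigma : Type} (O : Set (FTW Sigma)) (t : ℝ) (O' : Set (FTW Sigma)) : Prop :=
  (∀ o ∈ O, ∃ ostar ρ', ρ' ∈ O' ∧ IsConcatF o t ostar ρ') ∧
  (∀ o' ∈ O', ∃ o ∈ O, ∃ ostar, IsConcatF o t ostar o')

/-- The four-valued verdict set 𝔹₄ = {⊤, ⊥, ?, ×}. -/
inductive Verdict where
  | top  -- ⊤ : satisfied
  | bot  -- ⊥ : violated
  | unk  -- ? : unknown
  | oom  -- × : out-of-model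
deriving DecidableEq

/-- The monitoring verdict function 𝒱(φ,A)(O,t). -/
noncomputable def verdict {Sigma : Type} (φ A : Set (ITW Sigma)) (O : Set (FTW Sigma))
    (t : ℝ) : Verdict :=
  if concatSet O t Set.univ ∩ A = ∅ then .oom
  else if concatSet O t Set.univ ∩ A ⊆ φ then .top
  else if concatSet O t Set.univ ∩ A ⊆ φᶜ then .bot
  else .unk

/-- The specificity order ≼ on 𝔹₄: reflexive closure of
? ≼ ⊤, ? ≼ ⊥, ? ≼ ×, ⊤ ≼ ×, ⊥ ≼ ×. -/
def vle : Verdict → Verdict → Prop := fun x y => x = y ∨ x = .unk ∨ y = .oom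

/-- refinement monotonicity: if A ⊇ A', O ⊇ O', t ≤ t', t ≥ τ(O),
t' ≥ τ(O'), then 𝒱(φ,A)(O,t) ≼ 𝒱(φ,A')(O',t'). -/
theorem stmt7 {Sigma : Type} [Fintype Sigma] (φ A A' : Set (ITW Sigma))
    (O O' : Set (FTW Sigma)) (t t' : ℝ)
    (hA : A' ⊆ A) (hO : O' ⊆ O) (htt' : t ≤ t')
    (ht : ∀ o ∈ O, FTW.dur o ≤ t) (ht' : ∀ o' ∈ O', FTW.dur o' ≤ t') :
    vle (verdict φ A O t) (verdict φ A' O' t') := by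
  -- Key inclusion: concatSet O' t' univ ⊆ concatSet O t univ
  have key : concatSet O' t' Set.univ ⊆ concatSet O t Set.univ := by
    rintro ρ ⟨ρ₁, h₁, ρ₂, -, hd, hpre, hsuf⟩
    refine ⟨ρ₁, hO h₁, ⟨ρ₂.σ, fun i => ρ₂.τ i + (t' - t),
      fun i => add_nonneg (ρ₂.nonneg i) (sub_nonneg.mpr htt'),
      fun a b hab => by simpa using ρ₂.mono hab,
      Filter.tendsto_atTop_add_const_right _ _ ρ₂.div⟩, Set.mem_univ _,
      ht ρ₁ (hO h₁), hpre, fun i hi => ⟨(hsuf i hi).1, by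
        have := (hsuf i hi).2; simp only at this ⊢; linarith⟩⟩
  have key2 : concatSet O' t' Set.univ ∩ A' ⊆ concatSet O t Set.univ ∩ A :=
    Set.inter_subset_inter key hA
  unfold verdict
  by_cases h1 : concatSet O t Set.univ ∩ A = ∅
  · have h2 : concatSet O' t' Set.univ ∩ A' = ∅ :=
      Set.subset_eq_empty key2 h1
    simp [h1, h2, vle]
  · simp only [h1, if_neg]
    by_cases h2 : concatSet O' t' Set.univ ∩ A' = ∅
    · simp [h2, vle]
    · simp only [h2, if_neg]
      by_cases h3 : concatSet O t Set.univ ∩ A ⊆ φ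
      · have h4 : concatSet O' t' Set.univ ∩ A' ⊆ φ := key2.trans h3
        simp [h3, h4, vle]
      · simp only [h3, if_neg]
        by_cases h5 : concatSet O t Set.univ ∩ A ⊆ φᶜ
        · have h6 : concatSet O' t' Set.univ ∩ A' ⊆ φᶜ := key2.trans h5
          have h7 : ¬ concatSet O' t' Set.univ ∩ A' ⊆ φ := by
            intro h
            obtain ⟨x, hx⟩ := Set.nonempty_iff_ne_empty.mpr h2
            exact h6 hx (h hx)
          simp [h5, h6, h7, vle]
        · simp [h5, vle]
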